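/- Let F̃ be the CDF of an absolutely continuous probability measure on ℝ with density f̃, and let F(· | x̂) = Σ_{j=1}^L w_j H(· − x̂_j) be the empirical CDF of a Dirac mixture with distinct locations. Then the partial derivative of D(x̂) = ∫_ℝ (F̃(t) − F(t | x̂))² dt with respect to x̂_i equals 2 w_i (F̃(x̂_i) − F(x̂_i | x̂)), where F(x̂_i | x̂) uses the convention H(0) = 1/2. -/

import Mathlib

open MeasureTheory

/-- The Heaviside function with the convention `H(0) = 1/2`. -/
noncomputable def heaviside (t : ℝ) : ℝ :=
  if t < 0 then 0 else if t = 0 then 1 / 2 else 1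

/-!
Write `a := wᵢ`, `c := x̂ᵢ` and let `φ` be `F̃` minus the contribution of the other atoms, so that
the integrand is `(φ(t) - a H(t - y))²` when the `i`-th atom sits at `y`. Moving the atom from `c`
to `y` only changes the integrand between `c` and `y`, where `φ²` and `(φ - a)²` trade places;
hence `D(y) = D(c) + ∫_c^y (2aφ - a²)`. Since the other atoms are away from `c`, `φ` is continuous
at `c`, and the fundamental theorem of calculus gives the derivative `2a(φ(c) - a/2)`, which is
`2a(F̃(c) - F(c))` because `H(0) = 1/2`.

That `D` is finite is Markov's inequality: the first moment of `f̃` bounds `|t| |F̃(t) - F(t)|`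
outside a bounded interval containing the atoms, so the integrand is `O(1 / (1 + t²))`.
-/

open Set Filter Topology

lemma heaviside_of_neg {t : ℝ} (h : t < 0) : heaviside t = 0 := by simp [heaviside, h]

lemma heaviside_of_pos {t : ℝ} (h : 0 < t) : heaviside t = 1 := by
  simp [heaviside, h.not_gt, h.ne']

lemma heaviside_zero : heaviside 0 = 1 / 2 := by simp [heaviside]

lemma heaviside_of_ne_zero {t : ℝ} (h : t ≠ 0) : heaviside t = if 0 < t then 1 else 0 := by
  rcases h.lt_or_gt with h | h
  · simp [heaviside_of_neg h, h.not_gt]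
  · simp [heaviside_of_pos h, h]

lemma heaviside_nonneg (t : ℝ) : 0 ≤ heaviside t := by
  unfold heaviside; split_ifs <;> norm_num

lemma heaviside_le_one (t : ℝ) : heaviside t ≤ 1 := by
  unfold heaviside; split_ifs <;> norm_num

lemma monotone_heaviside : Monotone heaviside := by
  intro s t hst
  unfold heaviside
  split_ifs <;> grind

lemma continuousAt_heaviside {t : ℝ} (ht : t ≠ 0) : ContinuousAt heaviside t := by
  rcases ht.lt_or_gt with ht | ht
  · exact continuousAt_const.congr <| by
      filter_upwards [Iio_mem_nhds ht] with s hs using (heaviside_of_neg hs).symm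
  · exact continuousAt_const.congr <| by
      filter_upwards [Ioi_mem_nhds ht] with s hs using (heaviside_of_pos hs).symm

section JumpDerivative

lemma sq_sub_heaviside_sub_sq_ae_eq (φ : ℝ → ℝ) (a c y : ℝ) :
    (fun t => (φ t - a * heaviside (t - y)) ^ 2 - (φ t - a * heaviside (t - c)) ^ 2) =ᵐ[volume]
      fun t => (Ioc y c).indicator (fun t => a ^ 2 - 2 * a * φ t) t
        - (Ioc c y).indicator (fun t => a ^ 2 - 2 * a * φ t) t := by
  filter_upwards [Measure.ae_ne volume y, Measure.ae_ne volume c] with t hty htc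
  rw [heaviside_of_ne_zero (sub_ne_zero.2 hty), heaviside_of_ne_zero (sub_ne_zero.2 htc)]
  simp only [indicator_apply, mem_Ioc, sub_pos]
  split_ifs <;> grind

variable {φ : ℝ → ℝ} {a c : ℝ}

lemma integral_sq_sub_heaviside_eq (hφ : LocallyIntegrable φ)
    (hint : Integrable fun t => (φ t - a * heaviside (t - c)) ^ 2) (y : ℝ) :
    ∫ t, (φ t - a * heaviside (t - y)) ^ 2
      = (∫ t, (φ t - a * heaviside (t - c)) ^ 2) + ∫ t in c..y, (2 * a * φ t - a ^ 2) := by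
  set q : ℝ → ℝ := fun t => a ^ 2 - 2 * a * φ t
  have hq : LocallyIntegrable q := (locallyIntegrable_const _).sub (hφ.smul (2 * a))
  have hq_on : ∀ u v : ℝ, IntegrableOn q (Ioc u v) := fun u v =>
    (hq.integrableOn_isCompact isCompact_Icc).mono_set Ioc_subset_Icc_self
  calc ∫ t, (φ t - a * heaviside (t - y)) ^ 2
      = ∫ t, ((φ t - a * heaviside (t - c)) ^ 2
          + ((Ioc y c).indicator q t - (Ioc c y).indicator q t)) := by
        refine integral_congr_ae ?_
        filter_upwards [sq_sub_heaviside_sub_sq_ae_eq φ a c y] with t ht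
        linarith
    _ = (∫ t, (φ t - a * heaviside (t - c)) ^ 2) + ∫ t in y..c, q t := by
        have hyc := (hq_on y c).integrable_indicator measurableSet_Ioc
        have hcy := (hq_on c y).integrable_indicator measurableSet_Ioc
        have hdiff : Integrable fun t => (Ioc y c).indicator q t - (Ioc c y).indicator q t :=
          hyc.sub hcy
        rw [integral_add hint hdiff, integral_sub hyc hcy,
          integral_indicator measurableSet_Ioc, integral_indicator measurableSet_Ioc]
        rfl
    _ = _ := by
        rw [intervalIntegral.integral_symm, ← intervalIntegral.integral_neg]
        simp only [q, neg_sub]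

theorem hasDerivAt_integral_sq_sub_heaviside (hφ : LocallyIntegrable φ) (hφc : ContinuousAt φ c)
    (hint : Integrable fun t => (φ t - a * heaviside (t - c)) ^ 2) :
    HasDerivAt (fun y => ∫ t, (φ t - a * heaviside (t - y)) ^ 2) (2 * a * (φ c - a / 2)) c := by
  have hq : LocallyIntegrable fun t => 2 * a * φ t - a ^ 2 :=
    (hφ.smul (2 * a)).sub (locallyIntegrable_const _)
  have hFTC := intervalIntegral.integral_hasDerivAt_right (IntervalIntegrable.refl (a := c))
    hq.aestronglyMeasurable.stronglyMeasurableAtFilter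
    ((continuousAt_const.mul hφc).sub continuousAt_const)
  rw [funext (integral_sq_sub_heaviside_eq hφ hint),
    show 2 * a * (φ c - a / 2) = 2 * a * φ c - a ^ 2 by ring]
  exact hFTC.const_add _

end JumpDerivative

section DiracMixture

variable {ι : Type*} {w x : ι → ℝ} {t : ℝ}

lemma monotone_sum_heaviside (hw : ∀ j, 0 ≤ w j) (s : Finset ι) :
    Monotone fun t => ∑ j ∈ s, w j * heaviside (t - x j) := fun _ _ hst =>
  Finset.sum_le_sum fun j _ =>
    mul_le_mul_of_nonneg_left (monotone_heaviside (sub_le_sub_right hst _)) (hw j)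

lemma continuousAt_sum_erase_heaviside [DecidableEq ι] (hx : Function.Injective x) (s : Finset ι)
    (i : ι) : ContinuousAt (fun t => ∑ j ∈ s.erase i, w j * heaviside (t - x j)) (x i) :=
  tendsto_finsetSum _ fun j hj => continuousAt_const.mul <|
    ContinuousAt.comp (g := heaviside) (f := fun t => t - x j)
      (continuousAt_heaviside (sub_ne_zero.2 (hx.ne (Finset.ne_of_mem_erase hj)).symm))
      (continuousAt_id.sub continuousAt_const)

variable [Fintype ι]

noncomputable def diracMixtureCDF (w x : ι → ℝ) (t : ℝ) : ℝ :=
  ∑ j, w j * heaviside (t - x j)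

lemma diracMixtureCDF_nonneg (hw : ∀ j, 0 ≤ w j) : 0 ≤ diracMixtureCDF w x t :=
  Finset.sum_nonneg fun j _ => mul_nonneg (hw j) (heaviside_nonneg _)

lemma diracMixtureCDF_le_one (hw : ∀ j, 0 ≤ w j) (hw1 : ∑ j, w j = 1) :
    diracMixtureCDF w x t ≤ 1 :=
  hw1 ▸ Finset.sum_le_sum fun j _ => mul_le_of_le_one_right (hw j) (heaviside_le_one _)

lemma diracMixtureCDF_of_forall_lt (h : ∀ j, t < x j) : diracMixtureCDF w x t = 0 :=
  Finset.sum_eq_zero fun j _ => by rw [heaviside_of_neg (sub_neg.2 (h j)), mul_zero]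

lemma diracMixtureCDF_of_forall_gt (hw1 : ∑ j, w j = 1) (h : ∀ j, x j < t) :
    diracMixtureCDF w x t = 1 :=
  hw1 ▸ Finset.sum_congr rfl fun j _ => by rw [heaviside_of_pos (sub_pos.2 (h j)), mul_one]

lemma measurable_diracMixtureCDF (w x : ι → ℝ) : Measurable (diracMixtureCDF w x) :=
  Finset.measurable_sum _ fun _ _ =>
    (monotone_heaviside.measurable.comp (measurable_id.sub_const _)).const_mul _

lemma diracMixtureCDF_update [DecidableEq ι] (i : ι) (y : ℝ) :
    diracMixtureCDF w (Function.update x i y) t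
      = ∑ j ∈ Finset.univ.erase i, w j * heaviside (t - x j) + w i * heaviside (t - y) := by
  rw [diracMixtureCDF, ← Finset.sum_erase_add _ _ (Finset.mem_univ i), Function.update_self]
  congr 1
  exact Finset.sum_congr rfl fun j hj => by rw [Function.update_of_ne (Finset.ne_of_mem_erase hj)]

end DiracMixture

section Density

variable {f : ℝ → ℝ}

lemma continuous_integral_Iic (hf : Integrable f) : Continuous fun t => ∫ s in Iic t, f s :=
  continuous_iff_continuousAt.2 fun t =>
    (hf.integrableOn.continuousOn_Iic_primitive_Iic (a₀ := t + 1)).continuousAt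
      (Iic_mem_nhds (lt_add_one t))

lemma mul_setIntegral_le_integral_abs_mul (hf0 : ∀ s, 0 ≤ f s) (hf : Integrable f)
    (hmom : Integrable fun s => |s| * f s) {A : Set ℝ} (hA : MeasurableSet A) {r : ℝ}
    (hr : ∀ s ∈ A, r ≤ |s|) : r * ∫ s in A, f s ≤ ∫ s, |s| * f s :=
  calc r * ∫ s in A, f s = ∫ s in A, r * f s := (integral_const_mul r _).symm
    _ ≤ ∫ s in A, |s| * f s :=
        setIntegral_mono_on (hf.const_mul r).integrableOn hmom.integrableOn hA
          fun s hs => mul_le_mul_of_nonneg_right (hr s hs) (hf0 s)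
    _ ≤ ∫ s, |s| * f s :=
        setIntegral_le_integral hmom (ae_of_all _ fun s => mul_nonneg (abs_nonneg s) (hf0 s))

lemma integrable_sq_of_abs_le_of_abs_mul_le {g : ℝ → ℝ} (hg : AEStronglyMeasurable g)
    {B M R : ℝ} (hB : ∀ t, |g t| ≤ B) (hM : ∀ t, R ≤ |t| → |t| * |g t| ≤ M) :
    Integrable fun t => g t ^ 2 := by
  refine (integrable_inv_one_add_sq.const_mul ((1 + R ^ 2) * B ^ 2 + M ^ 2)).mono' (hg.pow 2)
    (ae_of_all _ fun t => ?_)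
  have hgB : g t ^ 2 ≤ B ^ 2 := by
    simpa only [sq_abs] using pow_le_pow_left₀ (abs_nonneg _) (hB t) 2
  rw [Real.norm_eq_abs, abs_of_nonneg (sq_nonneg _), ← div_eq_mul_inv,
    le_div_iff₀ (by positivity)]
  rcases lt_or_ge |t| R with ht | ht
  · have htR : t ^ 2 ≤ R ^ 2 := by nlinarith [abs_nonneg t, sq_abs t]
    nlinarith [sq_nonneg M, sq_nonneg t]
  · have htM : (|t| * |g t|) ^ 2 ≤ M ^ 2 := pow_le_pow_left₀ (by positivity) (hM t ht) 2
    rw [mul_pow, sq_abs, sq_abs] at htM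
    nlinarith [sq_nonneg R, sq_nonneg B]

lemma integrable_sq_integral_Iic_sub_diracMixtureCDF (hf0 : ∀ s, 0 ≤ f s) (hf : Integrable f)
    (hf1 : ∫ s, f s = 1) (hmom : Integrable fun s => |s| * f s) {ι : Type*} [Fintype ι]
    {w : ι → ℝ} (hw : ∀ j, 0 ≤ w j) (hw1 : ∑ j, w j = 1) (x : ι → ℝ) :
    Integrable fun t => ((∫ s in Iic t, f s) - diracMixtureCDF w x t) ^ 2 := by
  have hIic : ∀ t, 0 ≤ ∫ s in Iic t, f s := fun t =>
    setIntegral_nonneg measurableSet_Iic fun s _ => hf0 s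
  have hIoi : ∀ t, 0 ≤ ∫ s in Ioi t, f s := fun t =>
    setIntegral_nonneg measurableSet_Ioi fun s _ => hf0 s
  have hsplit : ∀ t, (∫ s in Iic t, f s) + ∫ s in Ioi t, f s = 1 := fun t => by
    rw [← hf1, ← integral_add_compl measurableSet_Iic hf, compl_Iic]
  have hx : ∀ j, |x j| < 1 + ∑ k, |x k| := fun j => by
    linarith [Finset.single_le_sum (fun k _ => abs_nonneg (x k)) (Finset.mem_univ j)]
  have hR : 0 ≤ ∑ k, |x k| := Finset.sum_nonneg fun k _ => abs_nonneg (x k)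
  refine integrable_sq_of_abs_le_of_abs_mul_le (B := 1) (M := ∫ s, |s| * f s)
    (R := 1 + ∑ k, |x k|)
    ((continuous_integral_Iic hf).measurable.sub
      (measurable_diracMixtureCDF w x)).aestronglyMeasurable (fun t => ?_) (fun t ht => ?_)
  · have := diracMixtureCDF_nonneg (x := x) (t := t) hw
    have := diracMixtureCDF_le_one (x := x) (t := t) hw hw1
    rw [abs_sub_le_iff]
    constructor <;> linarith [hIic t, hIoi t, hsplit t]
  · rcases le_abs'.1 ht with ht | ht
    · have htx : ∀ j, t < x j := fun j => by linarith [neg_abs_le (x j), hx j]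
      rw [diracMixtureCDF_of_forall_lt htx, sub_zero, abs_of_nonneg (hIic t)]
      exact mul_setIntegral_le_integral_abs_mul hf0 hf hmom measurableSet_Iic fun s hs =>
        abs_le_abs_of_nonpos (by linarith) hs
    · have htx : ∀ j, x j < t := fun j => by linarith [le_abs_self (x j), hx j]
      have hΦ : |(∫ s in Iic t, f s) - 1| = ∫ s in Ioi t, f s := by
        rw [abs_sub_comm, ← hsplit t, add_sub_cancel_left, abs_of_nonneg (hIoi t)]
      rw [diracMixtureCDF_of_forall_gt hw1 htx, hΦ]
      exact mul_setIntegral_le_integral_abs_mul hf0 hf hmom measurableSet_Ioi fun s hs =>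
        abs_le_abs_of_nonneg (by linarith) (le_of_lt hs)

end Density

theorem deriv_of_cvm_distance_general
    (L : ℕ) (w : Fin L → ℝ) (hw : ∀ i, 0 < w i) (hwsum : ∑ i, w i = 1)
    (xhat : Fin L → ℝ) (hx : StrictMono xhat)
    (ftil : ℝ → ℝ) (hf0 : ∀ t, 0 ≤ ftil t)
    (hfint : ∫ t, ftil t = 1) (hfmom : Integrable (fun t => |t| * ftil t))
    (Ftil : ℝ → ℝ) (hFtil : ∀ t, Ftil t = ∫ s in Set.Iic t, ftil s)
    (F : ℝ → (Fin L → ℝ) → ℝ)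
    (hF : ∀ t x, F t x = ∑ j, w j * heaviside (t - x j))
    (D : (Fin L → ℝ) → ℝ)
    (hD : ∀ x, D x = ∫ t, (Ftil t - F t x) ^ 2)
    (i : Fin L) :
    HasDerivAt (fun y => D (Function.update xhat i y))
      (2 * w i * (Ftil (xhat i) - F (xhat i) xhat)) (xhat i) := by
  obtain rfl : Ftil = fun t => ∫ s in Iic t, ftil s := funext hFtil
  obtain rfl : F = fun t x => diracMixtureCDF w x t := funext₂ hF
  obtain rfl : D = fun x => ∫ t, ((∫ s in Iic t, ftil s) - diracMixtureCDF w x t) ^ 2 :=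
    funext hD
  have hfi : Integrable ftil := .of_integral_ne_zero (by simp [hfint])
  have hw0 : ∀ j, 0 ≤ w j := fun j => (hw j).le
  set φ : ℝ → ℝ := fun t =>
    (∫ s in Iic t, ftil s) - ∑ j ∈ Finset.univ.erase i, w j * heaviside (t - xhat j)
  have hsplit : ∀ y t, (∫ s in Iic t, ftil s) - diracMixtureCDF w (Function.update xhat i y) t
      = φ t - w i * heaviside (t - y) := fun y t => by
    rw [diracMixtureCDF_update]; ring
  have hat : ∀ t, (∫ s in Iic t, ftil s) - diracMixtureCDF w xhat t
      = φ t - w i * heaviside (t - xhat i) := by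
    simpa only [Function.update_eq_self] using hsplit (xhat i)
  have hint := integrable_sq_integral_Iic_sub_diracMixtureCDF hf0 hfi hfint hfmom hw0 hwsum xhat
  simp only [hat, hsplit, sub_self, heaviside_zero] at hint ⊢
  rw [mul_one_div]
  have hcdf := continuous_integral_Iic hfi
  exact hasDerivAt_integral_sq_sub_heaviside
    (hcdf.locallyIntegrable.sub (monotone_sum_heaviside hw0 _).locallyIntegrable)
    (hcdf.continuousAt.sub (continuousAt_sum_erase_heaviside hx.injective _ i)) hint

/-- For a continuous probability density `f̃` with CDF `F̃` (and finite first
moment so that `D` is finite) and the Dirac mixture CDF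
`F(t|xhat) = ∑ⱼ wⱼ H(t − xhatⱼ)` at distinct sorted locations, the partial
derivative of `D(xhat) = ∫ (F̃(t) − F(t|xhat))² dt` w.r.t. `xhatᵢ` equals
`2 wᵢ (F̃(xhatᵢ) − F(xhatᵢ|xhat))`. -/
theorem deriv_of_cvm_distance
    (L : ℕ) (w : Fin L → ℝ) (hw : ∀ i, 0 < w i) (hwsum : ∑ i, w i = 1)
    (xhat : Fin L → ℝ) (hx : StrictMono xhat)
    (ftil : ℝ → ℝ) (hfc : Continuous ftil) (hf0 : ∀ t, 0 ≤ ftil t)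
    (hfint : ∫ t, ftil t = 1) (hfmom : Integrable (fun t => |t| * ftil t))
    (Ftil : ℝ → ℝ) (hFtil : ∀ t, Ftil t = ∫ s in Set.Iic t, ftil s)
    (F : ℝ → (Fin L → ℝ) → ℝ)
    (hF : ∀ t x, F t x = ∑ j, w j * heaviside (t - x j))
    (D : (Fin L → ℝ) → ℝ)
    (hD : ∀ x, D x = ∫ t, (Ftil t - F t x) ^ 2)
    (i : Fin L) :
    HasDerivAt (fun y => D (Function.update xhat i y))
      (2 * w i * (Ftil (xhat i) - F (xhat i) xhat)) (xhat i) :=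
  deriv_of_cvm_distance_general L w hw hwsum xhat hx ftil hf0 hfint hfmom Ftil hFtil F hF D hD i
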